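/- arXiv:1906.05569 — 5 statements merged into one kernel-verified Lean document; each statement's English description precedes it below -/
import Mathlib

section
/- Let f ∈ ℂ[x,y] be a polynomial of total degree n ≥ 1 whose coefficient of yⁿ is nonzero. Then there exist constants c > 0 and R₀ > 0 such that every (x,y) ∈ ℂ² with f(x,y) = 0 and ‖(x,y)‖ > R₀ satisfies |y| ≤ c·|x|. -/
/-!
Write `a` for the modulus of the coefficient of `yⁿ` and `C` for the sum of the moduli of the
other coefficients. In the region `|y| ≥ max(|x|, 1)` every monomial `xᵃ yᵇ` of `f` other than
`yⁿ` satisfies `|y| · |xᵃ yᵇ| ≤ (|x| + 1) |y|ⁿ`, so on the curve, where the `yⁿ` term is minus the sum of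
the other terms, `a |y| ≤ C (|x| + 1)`. Far from the origin in that region `|y|` is large, which
rules out `|x| < 1`, and then `|y| ≤ (2C/a) |x|`.
-/

open MvPolynomial Set
open scoped ENNReal

noncomputable section

abbrev Plane : Type := EuclideanSpace ℂ (Fin 2)

abbrev ProjPlane : Type := Projectivization ℂ (Fin 3 → ℂ)

def curve (f : MvPolynomial (Fin 2) ℂ) : Set Plane :=
  {p | MvPolynomial.eval (fun i => p i) f = 0}

def leadingForm (f : MvPolynomial (Fin 2) ℂ) : MvPolynomial (Fin 2) ℂ :=
  MvPolynomial.homogeneousComponent f.totalDegree f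

def homogenize (f : MvPolynomial (Fin 2) ℂ) : MvPolynomial (Fin 3) ℂ :=
  f.support.sum fun m =>
    MvPolynomial.monomial
      (Finsupp.single 0 (m 0) + Finsupp.single 1 (m 1) +
        Finsupp.single 2 (f.totalDegree - (m 0 + m 1))) (f.coeff m)

instance : TopologicalSpace ProjPlane :=
  @instTopologicalSpaceQuotient { v : Fin 3 → ℂ // v ≠ 0 }
    (projectivizationSetoid ℂ (Fin 3 → ℂ)) inferInstance

def projZeros (F : MvPolynomial (Fin 3) ℂ) : Set ProjPlane :=
  {q | MvPolynomial.eval q.rep F = 0}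

def lineAtInfinity : Set ProjPlane :=
  {q | q.rep 2 = 0}

def projClosure (f : MvPolynomial (Fin 2) ℂ) : Set ProjPlane :=
  projZeros (homogenize f)

def pointsAtInfinity (f : MvPolynomial (Fin 2) ℂ) : Set ProjPlane :=
  projClosure f ∩ lineAtInfinity

def singularPoints (F : MvPolynomial (Fin 3) ℂ) : Set ProjPlane :=
  {q | MvPolynomial.eval q.rep F = 0 ∧
    ∀ i : Fin 3, MvPolynomial.eval q.rep (MvPolynomial.pderiv i F) = 0}

def SameTopType {X Y : Type*} [TopologicalSpace X] [TopologicalSpace Y]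
    (A : Set X) (p : X) (B : Set Y) (q : Y) : Prop :=
  ∃ (U : Set X) (V : Set Y), IsOpen U ∧ IsOpen V ∧
    ∃ (hp : p ∈ U) (_ : q ∈ V) (h : U ≃ₜ V),
      (h ⟨p, hp⟩ : Y) = q ∧ ∀ x : U, (x : X) ∈ A ↔ (h x : Y) ∈ B

def IsBilipschitz {X Y : Type*} [MetricSpace X] [MetricSpace Y] (h : X → Y) : Prop :=
  Function.Bijective h ∧ ∃ c : ℝ, 0 < c ∧ ∀ x y : X,
    (1 / c) * dist x y ≤ dist (h x) (h y) ∧ dist (h x) (h y) ≤ c * dist x y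

def BilipschitzEquivAtInfinity (X Y : Set Plane) : Prop :=
  ∃ (K K' : Set Plane), IsCompact K ∧ IsCompact K' ∧
    ∃ h : (X \ K : Set Plane) → (Y \ K' : Set Plane), IsBilipschitz h

theorem mul_pow_mul_pow_le_add_one_mul_pow {X Y : ℝ} (hX : 0 ≤ X) (hXY : X ≤ Y) (hY : 1 ≤ Y)
    {a b n : ℕ} (hab : a + b ≤ n) (hne : ¬(a = 0 ∧ b = n)) :
    Y * (X ^ a * Y ^ b) ≤ (X + 1) * Y ^ n := by
  have hYn : 0 ≤ Y ^ n := by positivity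
  rcases Nat.eq_zero_or_pos a with rfl | ha
  · calc Y * (X ^ 0 * Y ^ b) = Y ^ (b + 1) := by ring
      _ ≤ Y ^ n := pow_le_pow_right₀ hY (by omega)
      _ ≤ (X + 1) * Y ^ n := by nlinarith
  · obtain ⟨a, rfl⟩ := Nat.exists_eq_add_of_lt ha
    calc Y * (X ^ (0 + a + 1) * Y ^ b) = X * (X ^ a * Y ^ (b + 1)) := by ring
      _ ≤ X * (Y ^ a * Y ^ (b + 1)) := by gcongr
      _ = X * Y ^ (a + b + 1) := by ring
      _ ≤ X * Y ^ n := mul_le_mul_of_nonneg_left (pow_le_pow_right₀ hY (by omega)) hX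
      _ ≤ (X + 1) * Y ^ n := by nlinarith

theorem EuclideanSpace.norm_le_norm_zero_add_norm_one {𝕜 : Type*} [RCLike 𝕜]
    (p : EuclideanSpace 𝕜 (Fin 2)) : ‖p‖ ≤ ‖p 0‖ + ‖p 1‖ := by
  rw [← sq_le_sq₀ (norm_nonneg _) (by positivity), EuclideanSpace.norm_sq_eq, Fin.sum_univ_two]
  nlinarith [norm_nonneg (p 0), norm_nonneg (p 1)]

namespace MvPolynomial

variable {σ 𝕜 : Type*} [Fintype σ] [DecidableEq σ] [NormedField 𝕜]

theorem norm_coeff_mul_prod_le_of_eval_eq_zero {f : MvPolynomial σ 𝕜} {x : σ → 𝕜}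
    (hf : eval x f = 0) (s : σ →₀ ℕ) :
    ‖f.coeff s‖ * ∏ i, ‖x i‖ ^ s i ≤
      ∑ m ∈ f.support.erase s, ‖f.coeff m‖ * ∏ i, ‖x i‖ ^ m i := by
  by_cases hs : s ∈ f.support
  swap
  · rw [notMem_support_iff.mp hs, norm_zero, zero_mul]
    positivity
  rw [eval_eq', ← Finset.add_sum_erase _ _ hs, add_eq_zero_iff_eq_neg] at hf
  calc ‖f.coeff s‖ * ∏ i, ‖x i‖ ^ s i = ‖f.coeff s * ∏ i, x i ^ s i‖ := by
        simp only [norm_mul, norm_prod, norm_pow]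
    _ = ‖∑ m ∈ f.support.erase s, f.coeff m * ∏ i, x i ^ m i‖ := by rw [hf, norm_neg]
    _ ≤ ∑ m ∈ f.support.erase s, ‖f.coeff m‖ * ∏ i, ‖x i‖ ^ m i := by
        refine (norm_sum_le _ _).trans_eq (Finset.sum_congr rfl fun m _ => ?_)
        simp only [norm_mul, norm_prod, norm_pow]

theorem norm_coeff_single_mul_le_of_eval_eq_zero {f : MvPolynomial (Fin 2) 𝕜} {n : ℕ}
    (hdeg : f.totalDegree ≤ n) {x : Fin 2 → 𝕜} (hf : eval x f = 0)
    (hxy : ‖x 0‖ ≤ ‖x 1‖) (hy : 1 ≤ ‖x 1‖) :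
    ‖f.coeff (Finsupp.single 1 n)‖ * ‖x 1‖ ≤
      (∑ m ∈ f.support.erase (Finsupp.single 1 n), ‖f.coeff m‖) * (‖x 0‖ + 1) := by
  set s : Fin 2 →₀ ℕ := Finsupp.single 1 n
  have hlead : ‖f.coeff s‖ * ‖x 1‖ ^ n ≤
      ∑ m ∈ f.support.erase s, ‖f.coeff m‖ * (‖x 0‖ ^ m 0 * ‖x 1‖ ^ m 1) := by
    simpa [Fin.prod_univ_two, s] using norm_coeff_mul_prod_le_of_eval_eq_zero hf s
  have hmonomial : ∀ m ∈ f.support.erase s, ‖x 1‖ * (‖x 0‖ ^ m 0 * ‖x 1‖ ^ m 1) ≤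
      (‖x 0‖ + 1) * ‖x 1‖ ^ n := by
    intro m hm
    have hmdeg : m 0 + m 1 ≤ n := by
      have := le_totalDegree (Finset.mem_of_mem_erase hm)
      rw [Finsupp.sum_fintype _ _ fun _ => rfl, Fin.sum_univ_two] at this
      omega
    refine mul_pow_mul_pow_le_add_one_mul_pow (norm_nonneg _) hxy hy hmdeg ?_
    rintro ⟨h0, h1⟩
    refine Finset.ne_of_mem_erase hm (Finsupp.ext fun i => ?_)
    fin_cases i <;> simp [s, h0, h1]
  have hyn : 0 < ‖x 1‖ ^ n := by positivity
  refine le_of_mul_le_mul_right ?_ hyn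
  calc ‖f.coeff s‖ * ‖x 1‖ * ‖x 1‖ ^ n = ‖x 1‖ * (‖f.coeff s‖ * ‖x 1‖ ^ n) := by ring
    _ ≤ ‖x 1‖ * ∑ m ∈ f.support.erase s, ‖f.coeff m‖ * (‖x 0‖ ^ m 0 * ‖x 1‖ ^ m 1) :=
        mul_le_mul_of_nonneg_left hlead (norm_nonneg _)
    _ = ∑ m ∈ f.support.erase s, ‖f.coeff m‖ * (‖x 1‖ * (‖x 0‖ ^ m 0 * ‖x 1‖ ^ m 1)) := by
        rw [Finset.mul_sum]; exact Finset.sum_congr rfl fun _ _ => by ring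
    _ ≤ ∑ m ∈ f.support.erase s, ‖f.coeff m‖ * ((‖x 0‖ + 1) * ‖x 1‖ ^ n) :=
        Finset.sum_le_sum fun m hm => mul_le_mul_of_nonneg_left (hmonomial m hm) (norm_nonneg _)
    _ = (∑ m ∈ f.support.erase s, ‖f.coeff m‖) * (‖x 0‖ + 1) * ‖x 1‖ ^ n := by
        rw [Finset.sum_mul, Finset.sum_mul]; exact Finset.sum_congr rfl fun _ _ => by ring

end MvPolynomial

theorem stmt7_general (f : MvPolynomial (Fin 2) ℂ) (n : ℕ)
    (hdeg : f.totalDegree = n)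
    (hcoeff : MvPolynomial.coeff (Finsupp.single (1 : Fin 2) n) f ≠ 0) :
    ∃ c > (0:ℝ), ∃ R₀ > (0:ℝ), ∀ p : Plane,
      MvPolynomial.eval (fun i => p i) f = 0 → R₀ < ‖p‖ → ‖p 1‖ ≤ c * ‖p 0‖ := by
  set a := ‖f.coeff (Finsupp.single 1 n)‖
  set K := (∑ m ∈ f.support.erase (Finsupp.single 1 n), ‖f.coeff m‖) / a
  have ha : 0 < a := norm_pos_iff.mpr hcoeff
  have hK : 0 ≤ K := by positivity
  refine ⟨2 * K + 1, by positivity, 4 * K + 2, by positivity, fun p hp hR => ?_⟩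
  rcases le_or_gt ‖p 1‖ ‖p 0‖ with hle | hlt
  · nlinarith [norm_nonneg (p 0)]
  have hbig : 2 * K + 1 < ‖p 1‖ := by
    linarith [EuclideanSpace.norm_le_norm_zero_add_norm_one p]
  have haffine : ‖p 1‖ ≤ K * (‖p 0‖ + 1) := by
    rw [div_mul_eq_mul_div, le_div_iff₀ ha, mul_comm]
    exact norm_coeff_single_mul_le_of_eval_eq_zero hdeg.le hp hlt.le (by linarith)
  rcases le_or_gt 1 ‖p 0‖ with hx | hx
  · nlinarith
  · nlinarith

theorem stmt7 (f : MvPolynomial (Fin 2) ℂ) (n : ℕ) (hn : 1 ≤ n)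
    (hdeg : f.totalDegree = n)
    (hcoeff : MvPolynomial.coeff (Finsupp.single (1 : Fin 2) n) f ≠ 0) :
    ∃ c > (0:ℝ), ∃ R₀ > (0:ℝ), ∀ p : Plane,
      MvPolynomial.eval (fun i => p i) f = 0 → R₀ < ‖p‖ → ‖p 1‖ ≤ c * ‖p 0‖ :=
  stmt7_general f n hdeg hcoeff
end
end

section
/- Let f ∈ ℂ[x,y] be a polynomial of total degree n ≥ 1 whose leading form factors as f_n(x,y) = ∏_{j=1}^m (y − a_j x)^{d_j}, where a_1, …, a_m ∈ ℂ are pairwise distinct and the d_j are positive integers with Σ_j d_j = n. Then for every ε > 0 there exists R₀ > 0 such that every (x,y) ∈ ℂ² with f(x,y) = 0 and ‖(x,y)‖ > R₀ satisfies |y − a_j x| ≤ ε·|x| for some j ∈ {1, …, m}. -/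
open MvPolynomial Set
open scoped ENNReal

noncomputable section

lemma coord_norm_le (p : Plane) (i : Fin 2) : ‖p i‖ ≤ ‖p‖ := by
  rw [EuclideanSpace.norm_eq]
  rw [show ‖p i‖ = Real.sqrt (‖p i‖ ^ 2) from (Real.sqrt_sq (norm_nonneg _)).symm]
  exact Real.sqrt_le_sqrt (Finset.single_le_sum (f := fun j => ‖p j‖ ^ 2)
    (fun j _ => by positivity) (Finset.mem_univ i))

lemma norm_le_sum_coord (p : Plane) : ‖p‖ ≤ ‖p 0‖ + ‖p 1‖ := by
  rw [EuclideanSpace.norm_eq, Fin.sum_univ_two]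
  have h0 := norm_nonneg (p 0); have h1 := norm_nonneg (p 1)
  calc Real.sqrt (‖p 0‖ ^ 2 + ‖p 1‖ ^ 2) ≤ Real.sqrt ((‖p 0‖ + ‖p 1‖) ^ 2) :=
        Real.sqrt_le_sqrt (by nlinarith)
    _ = ‖p 0‖ + ‖p 1‖ := Real.sqrt_sq (by linarith)

theorem stmt8 (f : MvPolynomial (Fin 2) ℂ) (n m : ℕ) (hn : 1 ≤ n)
    (hdeg : f.totalDegree = n)
    (a : Fin m → ℂ) (ha : Function.Injective a)
    (d : Fin m → ℕ) (hd : ∀ j, 0 < d j) (hsum : ∑ j, d j = n)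
    (hlead : leadingForm f = ∏ j, (X 1 - C (a j) * X 0) ^ d j) :
    ∀ ε > (0:ℝ), ∃ R₀ > (0:ℝ), ∀ p : Plane,
      MvPolynomial.eval (fun i => p i) f = 0 → R₀ < ‖p‖ →
        ∃ j, ‖p 1 - a j * p 0‖ ≤ ε * ‖p 0‖ := by
  intro ε hε
  set g : MvPolynomial (Fin 2) ℂ := f - leadingForm f with hgdef
  set Cb : ℝ := ∑ mm ∈ g.support, ‖g.coeff mm‖ with hCb
  have hCb0 : 0 ≤ Cb := Finset.sum_nonneg fun _ _ => norm_nonneg _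
  set c : ℝ := ∏ j, (ε / (ε + 1 + ‖a j‖)) ^ d j with hcdef
  have hcpos : 0 < c := Finset.prod_pos fun j _ => pow_pos (div_pos hε (by positivity)) _
  refine ⟨max 1 (Cb / c), lt_of_lt_of_le one_pos (le_max_left _ _), fun p hf hR => ?_⟩
  by_contra hcon
  push_neg at hcon
  have h1 : 1 < ‖p‖ := lt_of_le_of_lt (le_max_left _ _) hR
  have hp0 : (0:ℝ) < ‖p‖ := by linarith
  -- per-root lower bound
  have hj : ∀ j, (ε / (ε + 1 + ‖a j‖)) * ‖p‖ ≤ ‖p 1 - a j * p 0‖ := by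
    intro j
    have hw : ε * ‖p 0‖ ≤ ‖p 1 - a j * p 0‖ := (hcon j).le
    have h1n : ‖p 1‖ ≤ ‖p 1 - a j * p 0‖ + ‖a j‖ * ‖p 0‖ := by
      calc ‖p 1‖ = ‖(p 1 - a j * p 0) + a j * p 0‖ := by ring_nf
        _ ≤ ‖p 1 - a j * p 0‖ + ‖a j * p 0‖ := norm_add_le _ _
        _ = ‖p 1 - a j * p 0‖ + ‖a j‖ * ‖p 0‖ := by rw [norm_mul]
    have hps := norm_le_sum_coord p
    rw [div_mul_eq_mul_div, div_le_iff₀ (by positivity)]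
    have ha0 := norm_nonneg (a j)
    have hw0 := norm_nonneg (p 1 - a j * p 0)
    have h00 := norm_nonneg (p 0)
    nlinarith
  -- product lower bound
  have hprod : c * ‖p‖ ^ n ≤ ∏ j, ‖p 1 - a j * p 0‖ ^ d j := by
    have heq : c * ‖p‖ ^ n = ∏ j, ((ε / (ε + 1 + ‖a j‖)) * ‖p‖) ^ d j := by
      rw [hcdef, ← hsum, ← Finset.prod_pow_eq_pow_sum, ← Finset.prod_mul_distrib]
      simp [mul_pow]
    rw [heq]
    exact Finset.prod_le_prod (fun j _ => by positivity)
      (fun j _ => pow_le_pow_left₀ (by positivity) (hj j) _)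
  -- evaluate the leading form
  have hlf : MvPolynomial.eval (fun i => p i) (leadingForm f)
      = ∏ j, ((p 1 : ℂ) - a j * p 0) ^ d j := by
    rw [hlead]; simp
  have hnorm_lf : ‖MvPolynomial.eval (fun i => p i) (leadingForm f)‖
      = ∏ j, ‖p 1 - a j * p 0‖ ^ d j := by
    rw [hlf, norm_prod]
    exact Finset.prod_congr rfl fun j _ => norm_pow _ _
  -- split f
  have hsplit : MvPolynomial.eval (fun i => p i) (leadingForm f)
      = - MvPolynomial.eval (fun i => p i) g := by
    have hfeq : leadingForm f + g = f := by rw [hgdef]; ring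
    have h := congrArg (MvPolynomial.eval fun i => p i) hfeq
    rw [map_add, hf] at h
    exact eq_neg_of_add_eq_zero_left h
  -- monomials of g have degree ≤ n - 1
  have hsupp : ∀ mm ∈ g.support, (mm.sum fun _ e => e) ≤ n - 1 := by
    intro mm hm
    have hne : g.coeff mm ≠ 0 := MvPolynomial.mem_support_iff.mp hm
    have hco : g.coeff mm = f.coeff mm - (homogeneousComponent n f).coeff mm := by
      rw [hgdef]; simp [leadingForm, hdeg]
    rw [MvPolynomial.coeff_homogeneousComponent] at hco
    have hdsum : Finsupp.degree mm = mm.sum fun _ e => e := rfl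
    by_cases hdd : Finsupp.degree mm = n
    · rw [if_pos hdd] at hco; simp at hco; exact absurd hco hne
    · have hf' : f.coeff mm ≠ 0 := by
        intro h0; rw [if_neg hdd, h0] at hco; simp at hco; exact hne hco
      have hle : (mm.sum fun _ e => e) ≤ n :=
        hdeg ▸ MvPolynomial.le_totalDegree (MvPolynomial.mem_support_iff.mpr hf')
      rw [hdsum] at hdd
      omega
  -- upper bound on the lower-order part
  have hgb : ‖MvPolynomial.eval (fun i => p i) g‖ ≤ Cb * ‖p‖ ^ (n - 1) := by
    rw [MvPolynomial.eval_eq]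
    calc ‖∑ mm ∈ g.support, g.coeff mm * ∏ i ∈ mm.support, (fun i => p i) i ^ mm i‖
        ≤ ∑ mm ∈ g.support, ‖g.coeff mm * ∏ i ∈ mm.support, p i ^ mm i‖ := norm_sum_le _ _
      _ ≤ ∑ mm ∈ g.support, ‖g.coeff mm‖ * ‖p‖ ^ (n - 1) := ?_
      _ = Cb * ‖p‖ ^ (n - 1) := by rw [← Finset.sum_mul]
    refine Finset.sum_le_sum fun mm hm => ?_
    rw [norm_mul]
    refine mul_le_mul_of_nonneg_left ?_ (norm_nonneg _)
    calc ‖∏ i ∈ mm.support, p i ^ mm i‖ = ∏ i ∈ mm.support, ‖p i‖ ^ mm i := by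
          rw [norm_prod]; exact Finset.prod_congr rfl fun i _ => norm_pow _ _
      _ ≤ ∏ i ∈ mm.support, ‖p‖ ^ mm i := Finset.prod_le_prod (fun _ _ => by positivity)
          (fun i _ => pow_le_pow_left₀ (norm_nonneg _) (coord_norm_le p i) _)
      _ = ‖p‖ ^ (mm.sum fun _ e => e) := Finset.prod_pow_eq_pow_sum _ _ _
      _ ≤ ‖p‖ ^ (n - 1) := pow_le_pow_right₀ h1.le (hsupp mm hm)
  -- combine
  have key : c * ‖p‖ ^ n ≤ Cb * ‖p‖ ^ (n - 1) := by
    calc c * ‖p‖ ^ n ≤ ∏ j, ‖p 1 - a j * p 0‖ ^ d j := hprod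
      _ = ‖MvPolynomial.eval (fun i => p i) (leadingForm f)‖ := hnorm_lf.symm
      _ = ‖MvPolynomial.eval (fun i => p i) g‖ := by rw [hsplit, norm_neg]
      _ ≤ Cb * ‖p‖ ^ (n - 1) := hgb
  have hpow : ‖p‖ ^ n = ‖p‖ ^ (n - 1) * ‖p‖ := by
    rw [← pow_succ]; congr 1; omega
  have hple : ‖p‖ ≤ Cb / c := by
    rw [hpow] at key
    rw [le_div_iff₀ hcpos]
    have hpw : (0:ℝ) < ‖p‖ ^ (n - 1) := pow_pos hp0 _
    nlinarith
  have : Cb / c < ‖p‖ := lt_of_le_of_lt (le_max_right 1 (Cb / c)) hR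
  linarith
end
end

section
/- Let a, a' ∈ ℂ and ε > 0 satisfy 2ε < |a − a'|, and set V = {(x,y) ∈ ℂ² : |y − ax| ≤ ε|x|} and V' = {(x,y) ∈ ℂ² : |y − a'x| ≤ ε|x|}. Then there exists a constant c > 0 such that for every R > 0 and all u ∈ V, u' ∈ V' with ‖u‖ ≥ R and ‖u'‖ ≥ R, one has ‖u − u'‖ ≥ c·R. -/
open MvPolynomial Set
open scoped ENNReal

noncomputable section

lemma coord_le_norm (u : Plane) (i : Fin 2) : ‖u i‖ ≤ ‖u‖ := by
  have h : ‖u‖ = Real.sqrt (‖u 0‖ ^ 2 + ‖u 1‖ ^ 2) := by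
    rw [EuclideanSpace.norm_eq]; simp [Fin.sum_univ_two]
  rw [h, ← Real.sqrt_sq (norm_nonneg (u i))]
  apply Real.sqrt_le_sqrt
  fin_cases i <;> simp <;> nlinarith [sq_nonneg ‖u 0‖, sq_nonneg ‖u 1‖]

lemma norm_le_coords (u : Plane) : ‖u‖ ≤ ‖u 0‖ + ‖u 1‖ := by
  have h : ‖u‖ = Real.sqrt (‖u 0‖ ^ 2 + ‖u 1‖ ^ 2) := by
    rw [EuclideanSpace.norm_eq]; simp [Fin.sum_univ_two]
  rw [h, show ‖u 0‖ + ‖u 1‖ = Real.sqrt ((‖u 0‖ + ‖u 1‖) ^ 2) by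
    rw [Real.sqrt_sq (by positivity)]]
  apply Real.sqrt_le_sqrt
  nlinarith [norm_nonneg (u 0), norm_nonneg (u 1)]

theorem stmt10 (a a' : ℂ) (ε : ℝ) (hε : 0 < ε) (hsep : 2 * ε < ‖a - a'‖) :
    ∃ c > (0:ℝ), ∀ R > (0:ℝ), ∀ u u' : Plane,
      ‖u 1 - a * u 0‖ ≤ ε * ‖u 0‖ → ‖u' 1 - a' * u' 0‖ ≤ ε * ‖u' 0‖ →
      R ≤ ‖u‖ → R ≤ ‖u'‖ → c * R ≤ ‖u - u'‖ := by
  set δ : ℝ := ‖a - a'‖ - 2 * ε with hδdef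
  have hδ : 0 < δ := by simp only [hδdef]; linarith
  set A : ℝ := 1 + ‖a‖ + ε with hA
  set A' : ℝ := 1 + ‖a'‖ + ε with hA'
  have hApos : 0 < A := by positivity
  have hA'pos : 0 < A' := by positivity
  refine ⟨δ / (A * A'), by positivity, ?_⟩
  intro R hR u u' hu hu' hRu hRu'
  set D : ℝ := ‖u - u'‖ with hD
  have h0 : ‖u 0 - u' 0‖ ≤ D := by
    have := coord_le_norm (u - u') 0
    simpa using this
  have h1 : ‖u 1 - u' 1‖ ≤ D := by
    have := coord_le_norm (u - u') 1
    simpa using this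
  -- |u 0| is comparable to ‖u‖
  have hu1 : ‖u 1‖ ≤ (‖a‖ + ε) * ‖u 0‖ := by
    calc ‖u 1‖ = ‖(u 1 - a * u 0) + a * u 0‖ := by ring_nf
      _ ≤ ‖u 1 - a * u 0‖ + ‖a * u 0‖ := norm_add_le _ _
      _ ≤ ε * ‖u 0‖ + ‖a‖ * ‖u 0‖ := by rw [norm_mul]; linarith
      _ = (‖a‖ + ε) * ‖u 0‖ := by ring
  have hu0 : R ≤ A * ‖u 0‖ := by
    have := norm_le_coords u
    calc R ≤ ‖u‖ := hRu
      _ ≤ ‖u 0‖ + ‖u 1‖ := norm_le_coords u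
      _ ≤ ‖u 0‖ + (‖a‖ + ε) * ‖u 0‖ := by linarith
      _ = A * ‖u 0‖ := by rw [hA]; ring
  -- key estimate
  have e1 : ‖a - a'‖ * ‖u 0‖ ≤ ‖u 1 - a' * u 0‖ + ε * ‖u 0‖ := by
    calc ‖a - a'‖ * ‖u 0‖ = ‖(u 1 - a' * u 0) - (u 1 - a * u 0)‖ := by
          rw [← norm_mul]; ring_nf
      _ ≤ ‖u 1 - a' * u 0‖ + ‖u 1 - a * u 0‖ := norm_sub_le _ _
      _ ≤ ‖u 1 - a' * u 0‖ + ε * ‖u 0‖ := by linarith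
  have e2 : ‖u 1 - a' * u 0‖ ≤ (1 + ‖a'‖) * D + ε * ‖u' 0‖ := by
    calc ‖u 1 - a' * u 0‖
        = ‖(u 1 - u' 1) + a' * (u' 0 - u 0) + (u' 1 - a' * u' 0)‖ := by ring_nf
      _ ≤ ‖(u 1 - u' 1) + a' * (u' 0 - u 0)‖ + ‖u' 1 - a' * u' 0‖ := norm_add_le _ _
      _ ≤ ‖u 1 - u' 1‖ + ‖a' * (u' 0 - u 0)‖ + ε * ‖u' 0‖ := by
          have := norm_add_le (u 1 - u' 1) (a' * (u' 0 - u 0)); linarith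
      _ ≤ (1 + ‖a'‖) * D + ε * ‖u' 0‖ := by
          rw [norm_mul]
          have : ‖u' 0 - u 0‖ = ‖u 0 - u' 0‖ := norm_sub_rev _ _
          nlinarith [norm_nonneg a']
  have e3 : ‖u' 0‖ ≤ ‖u 0‖ + D := by
    calc ‖u' 0‖ = ‖u 0 - (u 0 - u' 0)‖ := by ring_nf
      _ ≤ ‖u 0‖ + ‖u 0 - u' 0‖ := norm_sub_le _ _
      _ ≤ ‖u 0‖ + D := by linarith
  have key : δ * ‖u 0‖ ≤ A' * D := by
    rw [hδdef, hA']; nlinarith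
  rw [div_mul_eq_mul_div, div_le_iff₀ (by positivity)]
  nlinarith [norm_nonneg (u 0), mul_le_mul_of_nonneg_left hu0 hδ.le,
    mul_le_mul_of_nonneg_left key hApos.le]
end
end

section
/- For every R > 0 and all z, z' ∈ ℂ with |z| ≥ R and |z'| ≥ R, there exists a continuous path α : [0,1] → ℂ with α(0) = z, α(1) = z', |α(t)| ≥ R for all t ∈ [0,1], and len(α) ≤ (2 + π/2)·|z − z'|. -/
open MvPolynomial Set
open scoped ENNReal

noncomputable section

/-!
Go radially from `z` to the circle of radius `r = min ‖z‖ ‖z'‖`, along the shorter arc of that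
circle, and radially out to `z'`. The two radial pieces have total length `|‖z‖ - ‖z'‖| ≤ ‖z - z'‖`.
The arc has length `r θ` with `θ` the angle between `z` and `z'`, and the law of cosines together
with `cos θ ≤ 1 - 2 θ² / π²` gives `r θ ≤ π / 2 * ‖z - z'‖`. So the path even has length at most
`(1 + π / 2) * ‖z - z'‖`.
-/

open InnerProductGeometry

def JoinedInWithLengthLE {E : Type*} [PseudoEMetricSpace E] (S : Set E) (L : ℝ≥0∞) (x y : E) :
    Prop :=
  ∃ α : ℝ → E, ContinuousOn α (Icc 0 1) ∧ α 0 = x ∧ α 1 = y ∧ MapsTo α (Icc 0 1) S ∧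
    eVariationOn α (Icc 0 1) ≤ L

theorem mul_norm_le_norm_of_mem_segment_smul {F : Type*} [NormedAddCommGroup F]
    [NormedSpace ℝ F] {x y : F} {c : ℝ} (hc₀ : 0 ≤ c) (hc₁ : c ≤ 1)
    (hy : y ∈ segment ℝ x (c • x)) : c * ‖x‖ ≤ ‖y‖ := by
  obtain ⟨a, b, ha, hb, hab, rfl⟩ := hy
  rw [smul_smul, ← add_smul, norm_smul, Real.norm_of_nonneg (by positivity)]
  gcongr
  nlinarith

theorem min_norm_mul_angle_le {V : Type*} [NormedAddCommGroup V] [InnerProductSpace ℝ V]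
    (x y : V) : min ‖x‖ ‖y‖ * angle x y ≤ Real.pi / 2 * ‖x - y‖ := by
  have hcos := Real.cos_le_one_sub_mul_cos_sq (x := angle x y)
    (abs_le.2 ⟨by linarith [angle_nonneg x y, Real.pi_pos], angle_le_pi x y⟩)
  have hlaw := norm_sub_sq_eq_norm_sq_add_norm_sq_sub_two_mul_norm_mul_norm_mul_cos_angle x y
  have hmin : min ‖x‖ ‖y‖ ^ 2 ≤ ‖x‖ * ‖y‖ := by
    rw [sq]; exact mul_le_mul (min_le_left _ _) (min_le_right _ _) (by positivity) (by positivity)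
  have hsq : (2 * (min ‖x‖ ‖y‖ * angle x y)) ^ 2 ≤ (Real.pi * ‖x - y‖) ^ 2 := by
    have hπ : Real.pi ^ 2 * Real.cos (angle x y) ≤ Real.pi ^ 2 - 2 * angle x y ^ 2 := by
      have := mul_le_mul_of_nonneg_left hcos (sq_nonneg Real.pi)
      rwa [mul_sub, mul_one, ← mul_assoc, mul_div_cancel₀ _ (by positivity)] at this
    nlinarith [mul_le_mul_of_nonneg_left hπ (by positivity : 0 ≤ 2 * (‖x‖ * ‖y‖)),
      mul_le_mul_of_nonneg_right hmin (sq_nonneg (angle x y)),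
      sq_nonneg (Real.pi * (‖x‖ - ‖y‖))]
  have hm : 0 ≤ 2 * (min ‖x‖ ‖y‖ * angle x y) :=
    mul_nonneg zero_le_two (mul_nonneg (le_min (norm_nonneg x) (norm_nonneg y)) (angle_nonneg x y))
  have := (pow_le_pow_iff_left₀ hm (by positivity) two_ne_zero).1 hsq
  linarith

namespace JoinedInWithLengthLE

section PseudoEMetricSpace

variable {E : Type*} [PseudoEMetricSpace E] {S T : Set E} {L L' L₁ L₂ : ℝ≥0∞} {x y z : E}

theorem mono (h : JoinedInWithLengthLE S L x y) (hST : S ⊆ T) (hL : L ≤ L') :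
    JoinedInWithLengthLE T L' x y :=
  let ⟨α, hαc, hα0, hα1, hαS, hαL⟩ := h
  ⟨α, hαc, hα0, hα1, hαS.mono_right hST, hαL.trans hL⟩

theorem of_lipschitzOnWith {α : ℝ → E} {K : NNReal} (hα : LipschitzOnWith K α (Icc 0 1))
    (hα0 : α 0 = x) (hα1 : α 1 = y) (hαS : MapsTo α (Icc 0 1) S) :
    JoinedInWithLengthLE S K x y := by
  refine ⟨α, hα.continuousOn, hα0, hα1, hαS, ?_⟩
  have hid : eVariationOn id (Icc (0 : ℝ) 1) = 1 := by
    have h := (monotoneOn_id (s := Icc (0 : ℝ) 1)).eVariationOn_eq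
      (left_mem_Icc.2 zero_le_one) (right_mem_Icc.2 zero_le_one)
    rwa [inter_self, id, id, sub_zero, ENNReal.ofReal_one] at h
  calc eVariationOn α (Icc 0 1) = eVariationOn (α ∘ id) (Icc 0 1) := rfl
    _ ≤ K * eVariationOn id (Icc (0 : ℝ) 1) := hα.comp_eVariationOn_le (mapsTo_id _)
    _ = K := by rw [hid, mul_one]

theorem trans (h₁ : JoinedInWithLengthLE S L₁ x y) (h₂ : JoinedInWithLengthLE S L₂ y z) :
    JoinedInWithLengthLE S (L₁ + L₂) x z := by
  obtain ⟨α, hαc, hα0, hα1, hαS, hαL⟩ := h₁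
  obtain ⟨β, hβc, hβ0, hβ1, hβS, hβL⟩ := h₂
  let γ : ℝ → E := fun t => if t ≤ 1 / 2 then α (2 * t) else β (2 * t - 1)
  have hφ : (fun t : ℝ => 2 * t) '' Icc 0 (1 / 2) = Icc 0 1 := by
    rw [image_mul_left_Icc' two_pos]; norm_num
  have hψ : (fun t : ℝ => 2 * t - 1) '' Icc (1 / 2) 1 = Icc 0 1 := by
    simp only [sub_eq_add_neg]; rw [image_affine_Icc' two_pos]; norm_num
  have hγα : EqOn γ (α ∘ fun t => 2 * t) (Icc 0 (1 / 2)) := fun t ht => if_pos ht.2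
  have hγβ : EqOn γ (β ∘ fun t => 2 * t - 1) (Icc (1 / 2) 1) := by
    rintro t ⟨ht, -⟩
    rcases ht.eq_or_lt with rfl | ht
    · norm_num [γ, hα1, hβ0]
    · exact if_neg (not_le.2 ht)
  have hhalves : Icc (0 : ℝ) 1 = Icc 0 (1 / 2) ∪ Icc (1 / 2) 1 :=
    (Icc_union_Icc_eq_Icc (by norm_num) (by norm_num)).symm
  refine ⟨γ, ?_, by norm_num [γ, hα0], by norm_num [γ, hβ1], ?_, ?_⟩
  · rw [hhalves]
    refine ContinuousOn.union_of_isClosed ?_ ?_ isClosed_Icc isClosed_Icc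
    · exact (hαc.comp (by fun_prop) (hφ ▸ mapsTo_image _ _)).congr hγα
    · exact (hβc.comp (by fun_prop) (hψ ▸ mapsTo_image _ _)).congr hγβ
  · rw [hhalves, ← union_self S]
    refine MapsTo.union_union ?_ ?_
    · exact (hαS.comp (hφ ▸ mapsTo_image _ _)).congr hγα.symm
    · exact (hβS.comp (hψ ▸ mapsTo_image _ _)).congr hγβ.symm
  · have hsplit := eVariationOn.Icc_add_Icc γ (s := univ)
      (by norm_num : (0 : ℝ) ≤ 1 / 2) (by norm_num : (1 / 2 : ℝ) ≤ 1) (mem_univ _)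
    simp only [univ_inter] at hsplit
    rw [← hsplit, eVariationOn.eq_of_eqOn hγα, eVariationOn.eq_of_eqOn hγβ,
      eVariationOn.comp_eq_of_monotoneOn _ _ fun s _ t _ hst => by linarith,
      eVariationOn.comp_eq_of_monotoneOn _ _ fun s _ t _ hst => by linarith, hφ, hψ]
    exact add_le_add hαL hβL

theorem symm (h : JoinedInWithLengthLE S L x y) : JoinedInWithLengthLE S L y x := by
  obtain ⟨α, hαc, hα0, hα1, hαS, hαL⟩ := h
  have hφ : (fun t : ℝ => 1 - t) '' Icc 0 1 = Icc 0 1 := by simp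
  have hmaps : MapsTo (fun t : ℝ => 1 - t) (Icc 0 1) (Icc 0 1) := fun t ht =>
    ⟨by linarith [ht.2], by linarith [ht.1]⟩
  refine ⟨α ∘ fun t => 1 - t, hαc.comp (by fun_prop) hmaps, by simpa using hα1,
    by simpa using hα0, hαS.comp hmaps, ?_⟩
  rw [eVariationOn.comp_eq_of_antitoneOn _ _ fun s _ t _ hst => by linarith, hφ]
  exact hαL

end PseudoEMetricSpace

section NormedSpace

variable {F : Type*} [NormedAddCommGroup F] [NormedSpace ℝ F]

theorem of_segment_subset {S : Set F} {x y : F} (h : segment ℝ x y ⊆ S) :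
    JoinedInWithLengthLE S (edist x y) x y := by
  rw [edist_nndist]
  exact of_lipschitzOnWith (lipschitzWith_lineMap x y).lipschitzOnWith
    (AffineMap.lineMap_apply_zero _ _) (AffineMap.lineMap_apply_one _ _)
    fun t ht => h (lineMap_mem_segment ℝ x y ht)

theorem radial (x : F) {c : ℝ} (hc₀ : 0 ≤ c) (hc₁ : c ≤ 1) :
    JoinedInWithLengthLE {y | c * ‖x‖ ≤ ‖y‖} (ENNReal.ofReal ((1 - c) * ‖x‖)) x (c • x) := by
  have h := of_segment_subset (x := x) (y := c • x) fun y hy =>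
    mul_norm_le_norm_of_mem_segment_smul hc₀ hc₁ hy
  have hsub : x - c • x = (1 - c) • x := by rw [sub_smul, one_smul]
  rwa [edist_dist, dist_eq_norm, hsub, norm_smul, Real.norm_of_nonneg (by linarith)] at h

end NormedSpace

theorem arc (c : ℂ) (θ : ℝ) :
    JoinedInWithLengthLE (Metric.sphere 0 ‖c‖) (‖c‖₊ * ‖θ‖₊) c
      (c * Complex.exp (θ * Complex.I)) := by
  refine of_lipschitzOnWith (α := fun t : ℝ => c * Complex.exp ((t * θ : ℝ) * Complex.I))
    (LipschitzWith.lipschitzOnWith ?_) (by simp) (by simp) fun t _ => by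
      rw [mem_sphere_zero_iff_norm, norm_mul, Complex.norm_exp_ofReal_mul_I, mul_one]
  refine LipschitzWith.of_dist_le_mul fun s t => ?_
  calc dist (c * Complex.exp ((s * θ : ℝ) * Complex.I))
        (c * Complex.exp ((t * θ : ℝ) * Complex.I))
      = ‖c‖ * dist (circleMap 0 1 (s * θ)) (circleMap 0 1 (t * θ)) := by
        simp [circleMap, dist_eq_norm, ← mul_sub]
    _ ≤ ‖c‖ * dist (s * θ) (t * θ) := by
        gcongr; simpa using (lipschitzWith_circleMap 0 1).dist_le_mul (s * θ) (t * θ)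
    _ = ‖c‖₊ * ‖θ‖₊ * dist s t := by
        simp only [Real.dist_eq, ← sub_mul, abs_mul, coe_nnnorm, Real.norm_eq_abs]
        ring

end JoinedInWithLengthLE

theorem Complex.joinedInWithLengthLE_setOf_le_norm {r : ℝ} (hr : 0 < r) {z z' : ℂ}
    (hz : r ≤ ‖z‖) (hz' : r ≤ ‖z'‖) :
    JoinedInWithLengthLE {w | r ≤ ‖w‖}
      (ENNReal.ofReal (‖z‖ - r) + ENNReal.ofReal (r * angle z z') + ENNReal.ofReal (‖z'‖ - r))
      z z' := by
  have hz₀ : z ≠ 0 := norm_pos_iff.1 (hr.trans_le hz)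
  have hz'₀ : z' ≠ 0 := norm_pos_iff.1 (hr.trans_le hz')
  have hr₁ : r / ‖z‖ * ‖z‖ = r := div_mul_cancel₀ _ (norm_ne_zero_iff.2 hz₀)
  have hr₂ : r / ‖z'‖ * ‖z'‖ = r := div_mul_cancel₀ _ (norm_ne_zero_iff.2 hz'₀)
  have h₁ := JoinedInWithLengthLE.radial z (c := r / ‖z‖) (by positivity)
    ((div_le_one₀ (hr.trans_le hz)).2 hz)
  have h₃ := (JoinedInWithLengthLE.radial z' (c := r / ‖z'‖) (by positivity)
    ((div_le_one₀ (hr.trans_le hz')).2 hz')).symm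
  rw [hr₁, sub_mul, one_mul, hr₁] at h₁
  rw [hr₂, sub_mul, one_mul, hr₂] at h₃
  have h₂ := JoinedInWithLengthLE.arc ((r / ‖z‖) • z) (arg (z' / z))
  have hnorm : ‖(r / ‖z‖) • z‖ = r := by
    rw [norm_smul, Real.norm_of_nonneg (by positivity), hr₁]
  have hend : (r / ‖z‖) • z * exp (arg (z' / z) * I) = (r / ‖z'‖) • z' := by
    have h := norm_mul_exp_arg_mul_I (z' / z)
    have hz₁ : (‖z‖ : ℂ) ≠ 0 := by simpa using hz₀
    have hz'₁ : (‖z'‖ : ℂ) ≠ 0 := by simpa using hz'₀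
    rw [norm_div] at h
    simp only [real_smul]
    push_cast at h ⊢
    field_simp at h ⊢
    linear_combination r * h
  have hlen : (‖(r / ‖z‖) • z‖₊ : ℝ≥0∞) * ‖arg (z' / z)‖₊ = ENNReal.ofReal (r * angle z z') := by
    rw [angle_comm, angle_eq_abs_arg hz'₀ hz₀, ENNReal.ofReal_mul hr.le, ← Real.norm_eq_abs,
      ofReal_norm]
    conv_rhs => rw [← hnorm, ofReal_norm]
    rfl
  rw [hend, hlen, hnorm] at h₂
  exact (h₁.trans (h₂.mono (fun w hw => (mem_sphere_zero_iff_norm.1 hw).ge) le_rfl)).trans h₃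

theorem stmt11 (R : ℝ) (hR : 0 < R) (z z' : ℂ) (hz : R ≤ ‖z‖) (hz' : R ≤ ‖z'‖) :
    ∃ α : ℝ → ℂ, ContinuousOn α (Set.Icc 0 1) ∧ α 0 = z ∧ α 1 = z' ∧
      (∀ t ∈ Set.Icc (0:ℝ) 1, R ≤ ‖α t‖) ∧
      eVariationOn α (Set.Icc 0 1) ≤
        ENNReal.ofReal ((2 + Real.pi / 2) * ‖z - z'‖) := by
  set r := min ‖z‖ ‖z'‖
  have hRr : R ≤ r := le_min hz hz'
  have hrz : r ≤ ‖z‖ := min_le_left _ _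
  have hrz' : r ≤ ‖z'‖ := min_le_right _ _
  have hradial : ‖z‖ - r + (‖z'‖ - r) ≤ ‖z - z'‖ := by
    linarith [min_add_max ‖z‖ ‖z'‖, max_sub_min_eq_abs' ‖z‖ ‖z'‖, abs_norm_sub_norm_le z z']
  have hlen : ENNReal.ofReal (‖z‖ - r) + ENNReal.ofReal (r * angle z z') +
      ENNReal.ofReal (‖z'‖ - r) ≤ ENNReal.ofReal ((2 + Real.pi / 2) * ‖z - z'‖) := by
    have harc : 0 ≤ r * angle z z' := mul_nonneg (hR.le.trans hRr) (angle_nonneg z z')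
    rw [← ENNReal.ofReal_add (by linarith) harc, ← ENNReal.ofReal_add (by linarith) (by linarith)]
    refine ENNReal.ofReal_le_ofReal ?_
    linarith [min_norm_mul_angle_le z z', norm_nonneg (z - z')]
  exact (Complex.joinedInWithLengthLE_setOf_le_norm (hR.trans_le hRr) hrz hrz').mono
    (fun w hw => hRr.trans hw) hlen
end
end

section
/- Let f ∈ ℂ[x,y] be a nonconstant polynomial with leading form f_n, let C = {(x,y) ∈ ℂ² : f(x,y) = 0}, and let P : ℂ² → ℂ be a ℂ-linear map such that P(a,b) ≠ 0 for every (a,b) ∈ ℂ² ∖ {(0,0)} with f_n(a,b) = 0. Then there exist constants c > 0 and R₀ > 0 such that |P(x,y)| ≥ c·‖(x,y)‖ for every (x,y) ∈ C with ‖(x,y)‖ > R₀. -/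
open MvPolynomial Set
open scoped ENNReal

noncomputable section

/-!
On the unit sphere the continuous function `u ↦ ‖P u‖ + |f_n(u)|` has no zero, so by compactness
it is bounded below by some `ε > 0`. If `f(p) = 0` with `‖p‖ = r ≥ 1`, write `p = r u` with
`‖u‖ = 1`; then `r ^ n f_n(u) = f_n(p) = -(f - f_n)(p)`, and the lower-order part is
`O(r ^ (n - 1))`, so `|f_n(u)| ≤ C / r`. For `r > 2C / ε` this forces `‖P u‖ ≥ ε / 2`,
i.e. `‖P p‖ ≥ (ε / 2) ‖p‖`.
-/

namespace MvPolynomial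

variable {σ R : Type*} [Fintype σ]

theorem IsHomogeneous.eval_smul [CommSemiring R] {φ : MvPolynomial σ R} {n : ℕ}
    (hφ : φ.IsHomogeneous n) (c : R) (x : σ → R) :
    eval (c • x) φ = c ^ n * eval x φ := by
  rw [eval_eq', eval_eq', Finset.mul_sum]
  refine Finset.sum_congr rfl fun d hd => ?_
  have hdeg : ∑ i, d i = n := by
    rw [← Finsupp.degree_eq_sum, Finsupp.degree_eq_weight_one]
    exact hφ (mem_support_iff.mp hd)
  simp only [Pi.smul_apply, smul_eq_mul, mul_pow, Finset.prod_mul_distrib,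
    Finset.prod_pow_eq_pow_sum, hdeg]
  ring

theorem mul_norm_eval_le [NormedCommRing R] [NormOneClass R] {g : MvPolynomial σ R} {n : ℕ}
    (hg : ∀ m ∈ g.support, m.degree < n) {x : σ → R} {r : ℝ} (hr : 1 ≤ r)
    (hx : ∀ i, ‖x i‖ ≤ r) :
    r * ‖eval x g‖ ≤ (∑ m ∈ g.support, ‖g.coeff m‖) * r ^ n := by
  rw [eval_eq', Finset.sum_mul]
  refine (mul_le_mul_of_nonneg_left (norm_sum_le _ _) (by linarith)).trans ?_
  rw [Finset.mul_sum]
  refine Finset.sum_le_sum fun m hm => ?_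
  have hprod : ‖∏ i, x i ^ m i‖ ≤ r ^ m.degree := by
    rw [Finsupp.degree_eq_sum, ← Finset.prod_pow_eq_pow_sum]
    refine (Finset.norm_prod_le _ _).trans (Finset.prod_le_prod (fun _ _ => norm_nonneg _)
      fun i _ => (norm_pow_le _ _).trans (pow_le_pow_left₀ (norm_nonneg _) (hx i) _))
  calc r * ‖g.coeff m * ∏ i, x i ^ m i‖
      ≤ r * (‖g.coeff m‖ * r ^ m.degree) := by
        gcongr
        exact (norm_mul_le _ _).trans (by gcongr)
    _ = ‖g.coeff m‖ * r ^ (m.degree + 1) := by ring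
    _ ≤ ‖g.coeff m‖ * r ^ n := by gcongr; exact hg m hm

end MvPolynomial

open MvPolynomial

theorem degree_lt_of_mem_support_sub_leadingForm {f : MvPolynomial (Fin 2) ℂ} {m : Fin 2 →₀ ℕ}
    (hm : m ∈ (f - leadingForm f).support) : m.degree < f.totalDegree := by
  rw [mem_support_iff, coeff_sub, leadingForm, coeff_homogeneousComponent] at hm
  split_ifs at hm with h
  · exact absurd (sub_self _) hm
  · refine lt_of_le_of_ne ?_ h
    rw [sub_zero] at hm
    exact le_totalDegree (mem_support_iff.mpr hm)

theorem mul_norm_eval_leadingForm_le {f : MvPolynomial (Fin 2) ℂ} {x : Fin 2 → ℂ} {r : ℝ}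
    (hr : 1 ≤ r) (hx : ∀ i, ‖x i‖ ≤ 1) (hf : eval ((r : ℂ) • x) f = 0) :
    r * ‖eval x (leadingForm f)‖ ≤
      ∑ m ∈ (f - leadingForm f).support, ‖(f - leadingForm f).coeff m‖ := by
  set n := f.totalDegree
  have hr0 : 0 < r := by linarith
  have hrx : ∀ i, ‖((r : ℂ) • x) i‖ ≤ r := fun i => by
    simpa [abs_of_pos hr0] using mul_le_mul_of_nonneg_left (hx i) hr0.le
  have hlower := mul_norm_eval_le (g := f - leadingForm f)
    (fun _ => degree_lt_of_mem_support_sub_leadingForm) hr hrx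
  have hscale : eval ((r : ℂ) • x) (leadingForm f) = (r : ℂ) ^ n * eval x (leadingForm f) :=
    (homogeneousComponent_isHomogeneous n f).eval_smul _ _
  have hsplit : eval ((r : ℂ) • x) (f - leadingForm f) = -eval ((r : ℂ) • x) (leadingForm f) := by
    rw [map_sub, hf, zero_sub]
  rw [hsplit, norm_neg, hscale, norm_mul, norm_pow, Complex.norm_real, Real.norm_of_nonneg hr0.le,
    mul_left_comm] at hlower
  exact le_of_mul_le_mul_right (by linarith) (pow_pos hr0 n)

theorem exists_pos_le_norm_add_norm_eval_leadingForm {f : MvPolynomial (Fin 2) ℂ}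
    {P : Plane →ₗ[ℂ] ℂ}
    (hP : ∀ a : Plane, a ≠ 0 → eval (fun i => a i) (leadingForm f) = 0 → P a ≠ 0) :
    ∃ ε > 0, ∀ u ∈ Metric.sphere (0 : Plane) 1,
      ε ≤ ‖P u‖ + ‖eval (fun i => u i) (leadingForm f)‖ := by
  refine (isCompact_sphere 0 1).exists_forall_le' (Continuous.continuousOn ?_) fun u hu => ?_
  · exact P.continuous_of_finiteDimensional.norm.add
      ((continuous_eval _).comp (PiLp.continuous_ofLp 2 _)).norm
  · have hu0 : u ≠ 0 := ne_zero_of_mem_unit_sphere ⟨u, hu⟩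
    by_cases hL : eval (fun i => u i) (leadingForm f) = 0
    · exact add_pos_of_pos_of_nonneg (norm_pos_iff.mpr (hP u hu0 hL)) (norm_nonneg _)
    · exact add_pos_of_nonneg_of_pos (norm_nonneg _) (norm_pos_iff.mpr hL)

theorem stmt13_general (f : MvPolynomial (Fin 2) ℂ)
    (P : Plane →ₗ[ℂ] ℂ)
    (hP : ∀ a : Plane, a ≠ 0 →
      MvPolynomial.eval (fun i => a i) (leadingForm f) = 0 → P a ≠ 0) :
    ∃ c > (0:ℝ), ∃ R₀ > (0:ℝ), ∀ p : Plane,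
      MvPolynomial.eval (fun i => p i) f = 0 → R₀ < ‖p‖ → c * ‖p‖ ≤ ‖P p‖ := by
  set C := ∑ m ∈ (f - leadingForm f).support, ‖(f - leadingForm f).coeff m‖
  obtain ⟨ε, hε, hεle⟩ := exists_pos_le_norm_add_norm_eval_leadingForm hP
  have hC : 0 ≤ C := Finset.sum_nonneg fun _ _ => norm_nonneg _
  refine ⟨ε / 2, by positivity, 2 * C / ε + 1, by positivity, fun p hp hpR => ?_⟩
  set r := ‖p‖
  have hr1 : 1 ≤ r := by linarith [show 0 ≤ 2 * C / ε by positivity]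
  have hr0 : 0 < r := by linarith
  set u : Plane := (r : ℂ)⁻¹ • p
  have hpu : p = (r : ℂ) • u := by
    rw [smul_smul, mul_inv_cancel₀ (by exact_mod_cast hr0.ne'), one_smul]
  have hu : ‖u‖ = 1 := by
    simp [u, norm_smul, r, inv_mul_cancel₀ hr0.ne']
  have hLu := mul_norm_eval_leadingForm_le (x := fun i => u i) (f := f) (r := r) hr1
    (fun i => hu ▸ PiLp.norm_apply_le u i) (by rw [← hp, hpu]; rfl)
  have hCr : C < r * (ε / 2) := by
    have : 2 * C / ε < r := by linarith
    rw [div_lt_iff₀ hε] at this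
    linarith
  have hPu : ε / 2 ≤ ‖P u‖ := by
    have hLsmall := lt_of_mul_lt_mul_left (hLu.trans_lt hCr) hr0.le
    linarith [hεle u (mem_sphere_zero_iff_norm.mpr hu)]
  calc ε / 2 * r ≤ ‖P u‖ * r := by gcongr
    _ = ‖(r : ℂ) • P u‖ := by
      rw [norm_smul, Complex.norm_real, Real.norm_of_nonneg hr0.le, mul_comm]
    _ = ‖P p‖ := by rw [← map_smul, ← hpu]

theorem stmt13 (f : MvPolynomial (Fin 2) ℂ)
    (hf0 : 0 < f.totalDegree)
    (P : Plane →ₗ[ℂ] ℂ)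
    (hP : ∀ a : Plane, a ≠ 0 →
      MvPolynomial.eval (fun i => a i) (leadingForm f) = 0 → P a ≠ 0) :
    ∃ c > (0:ℝ), ∃ R₀ > (0:ℝ), ∀ p : Plane,
      MvPolynomial.eval (fun i => p i) f = 0 → R₀ < ‖p‖ → c * ‖p‖ ≤ ‖P p‖ :=
  stmt13_general f P hP
end
end
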